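/- The quiver Γ̄ whose vertices are the admissible arcs of P_{g,h} (preprojective, preinjective, and peripheral arcs) and whose arrows are all elementary moves and all long moves is connected: for any two admissible arcs α and β there is a finite sequence α = α_0, α_1, …, α_t = β of admissible arcs such that for each s there is an elementary or long move from α_s to α_{s+1} or from α_{s+1} to α_s. -/

import Mathlib

/-- Shift the first entry of every point of `A` by `d` (well defined on arcs, since it
commutes with the deck transformations). -/
def shiftFst (d : ℤ) (A : Set (ℤ × ℤ)) : Set (ℤ × ℤ) := (fun p => (p.1 + d, p.2)) '' A

/-- Shift the second entry of every point of `A` by `d` (well defined on arcs). -/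
def shiftSnd (d : ℤ) (A : Set (ℤ × ℤ)) : Set (ℤ × ℤ) := (fun p => (p.1, p.2 + d)) '' A

/-- The bridging arc `π[x_∂, y_∂']` of the annulus `P_{g,h}`, from the outer boundary `∂`
to the inner boundary `∂'`: the orbit of `(x, y) ∈ ℤ × ℤ` under `σ·(x,y) = (x+g, y+h)`. -/
def orbPP (g h x y : ℤ) : Set (ℤ × ℤ) := {q : ℤ × ℤ | ∃ k : ℤ, q = (x + k * g, y + k * h)}

/-- Elementary moves between bridging arcs from `∂` to `∂'`:
`π[x_∂, y_∂'] → π[(x-1)_∂, y_∂']` and `π[x_∂, y_∂'] → π[x_∂, (y+1)_∂']`. -/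
def elemPP (A B : Set (ℤ × ℤ)) : Prop := B = shiftFst (-1) A ∨ B = shiftSnd 1 A

/-- A bridging arc from `∂` to `∂'` is preprojective if it can be reached from
`β_g = π[0_∂, 0_∂']` by a finite (possibly empty) sequence of elementary moves. -/
def IsPreproj (g h : ℤ) (A : Set (ℤ × ℤ)) : Prop :=
  Relation.ReflTransGen elemPP (orbPP g h 0 0) A

/-- The bridging arc `π[j_∂', x_∂]` of the annulus `P_{g,h}`, from the inner boundary `∂'`
to the outer boundary `∂`: the orbit of `(j, x) ∈ ℤ × ℤ` under `σ·(j,x) = (j+h, x+g)`. -/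
def orbPI (g h j x : ℤ) : Set (ℤ × ℤ) := {q : ℤ × ℤ | ∃ k : ℤ, q = (j + k * h, x + k * g)}

/-- Elementary moves between bridging arcs from `∂'` to `∂`:
`π[j_∂', x_∂] → π[(j+1)_∂', x_∂]` and `π[j_∂', x_∂] → π[j_∂', (x-1)_∂]`. -/
def elemPI (A B : Set (ℤ × ℤ)) : Prop := B = shiftFst 1 A ∨ B = shiftSnd (-1) A

/-- The injective arcs: `γ_i = π[(-2)_∂', (i-g+2)_∂]` for `0 ≤ i ≤ g` and
`γ_i = π[(i-g-2)_∂', 2_∂]` for `g < i ≤ n`. -/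
def gammaArc (g h i : ℤ) : Set (ℤ × ℤ) :=
  if i ≤ g then orbPI g h (-2) (i - g + 2) else orbPI g h (i - g - 2) 2

/-- A bridging arc from `∂'` to `∂` is preinjective if `γ_0` can be reached from it by a
finite (possibly empty) sequence of elementary moves. -/
def IsPreinj (g h : ℤ) (A : Set (ℤ × ℤ)) : Prop :=
  Relation.ReflTransGen elemPI A (gammaArc g h 0)

/-- The peripheral arc `π[i, j]` with period `c` (`c = g` at the outer boundary `∂`,
`c = h` at the inner boundary `∂'`): the orbit of `(i, j) ∈ ℤ × ℤ` (with `j ≥ i + 2`)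
under the shift `σ·(i,j) = (i+c, j+c)`. -/
def orbPer (c i j : ℤ) : Set (ℤ × ℤ) := {q : ℤ × ℤ | ∃ k : ℤ, q = (i + k * c, j + k * c)}

/-- Peripheral arcs at the outer boundary `∂` of `P_{g,h}`. -/
def IsPerOut (g : ℤ) (A : Set (ℤ × ℤ)) : Prop := ∃ i j : ℤ, i + 2 ≤ j ∧ A = orbPer g i j

/-- Peripheral arcs at the inner boundary `∂'` of `P_{g,h}`. -/
def IsPerIn (h : ℤ) (A : Set (ℤ × ℤ)) : Prop := ∃ i j : ℤ, i + 2 ≤ j ∧ A = orbPer h i j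

/-- Elementary moves between peripheral arcs at `∂`: `π[i_∂, j_∂] → π[(i-1)_∂, j_∂]`, and
`π[i_∂, j_∂] → π[i_∂, (j-1)_∂]` provided the result is still a peripheral arc
(i.e. `j ≥ i + 3`). -/
def elemPerOut (g : ℤ) (A B : Set (ℤ × ℤ)) : Prop :=
  B = shiftFst (-1) A ∨ (IsPerOut g (shiftSnd (-1) A) ∧ B = shiftSnd (-1) A)

/-- Elementary moves between peripheral arcs at `∂'`: `π[i_∂', j_∂'] → π[i_∂', (j+1)_∂']`,
and `π[i_∂', j_∂'] → π[(i+1)_∂', j_∂']` provided `j ≥ i + 3`. -/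
def elemPerIn (h : ℤ) (A B : Set (ℤ × ℤ)) : Prop :=
  B = shiftSnd 1 A ∨ (IsPerIn h (shiftFst 1 A) ∧ B = shiftFst 1 A)

/-- Admissible arcs of the annulus, tagged by their kind: bridging `∂ → ∂'` (`pp`),
bridging `∂' → ∂` (`pi`), peripheral at `∂` (`po`), peripheral at `∂'` (`pe`). -/
inductive AArc where
  | pp (A : Set (ℤ × ℤ))
  | pi (A : Set (ℤ × ℤ))
  | po (A : Set (ℤ × ℤ))
  | pe (A : Set (ℤ × ℤ))

/-- An arc is admissible if it is preprojective, preinjective or peripheral. -/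
def Admissible (g h : ℤ) : AArc → Prop
  | .pp A => IsPreproj g h A
  | .pi A => IsPreinj g h A
  | .po A => IsPerOut g A
  | .pe A => IsPerIn h A

/-- The arrows of the quiver `Γ̄`: all elementary moves together with all long moves.
Long moves go from a preprojective arc `π[x_∂, y_∂']` to `π[x_∂, (x+k)_∂]` (`k ≥ 2`) and
to `π[(y-k)_∂', y_∂']` (`k ≥ 2`); from a peripheral arc `π[a_∂, y_∂]` to every
preinjective arc `π[x_∂', y_∂]`; and from a peripheral arc `π[x_∂', b_∂']` to every
preinjective arc `π[x_∂', z_∂]`. -/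
def Move (g h : ℤ) : AArc → AArc → Prop
  | .pp A, .pp B => elemPP A B
  | .pi A, .pi B => elemPI A B
  | .po A, .po B => elemPerOut g A B
  | .pe A, .pe B => elemPerIn h A B
  | .pp A, .po B =>
      IsPreproj g h A ∧ ∃ x y k : ℤ, 2 ≤ k ∧ A = orbPP g h x y ∧ B = orbPer g x (x + k)
  | .pp A, .pe B =>
      IsPreproj g h A ∧ ∃ x y k : ℤ, 2 ≤ k ∧ A = orbPP g h x y ∧ B = orbPer h (y - k) y
  | .po A, .pi B =>
      ∃ a y x : ℤ, a + 2 ≤ y ∧ A = orbPer g a y ∧ B = orbPI g h x y ∧ IsPreinj g h B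
  | .pe A, .pi B =>
      ∃ x b z : ℤ, x + 2 ≤ b ∧ A = orbPer h x b ∧ B = orbPI g h x z ∧ IsPreinj g h B
  | _, _ => False

/-!
Every admissible arc is joined to `β_g = π[0_∂, 0_∂']`. Preprojective arcs are joined to it by
definition, and so is every preinjective arc to `γ_0`. Since `σ` lets us move the representative
of an orbit, any peripheral arc is the target of a long move from some `π[x_∂, y_∂']` with
`x ≤ 0 ≤ y`, which is preprojective. Finally `γ_0 = π[(-2)_∂', (2-g)_∂]` is the target of a long
move from the peripheral arc `π[(-g)_∂, (2-g)_∂]`.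
-/

open Relation

section Orbit

variable (a b x y : ℤ)

lemma shiftFst_orbit (d : ℤ) :
    shiftFst d {q : ℤ × ℤ | ∃ k : ℤ, q = (x + k * a, y + k * b)}
      = {q : ℤ × ℤ | ∃ k : ℤ, q = (x + d + k * a, y + k * b)} := by
  ext ⟨u, v⟩
  simp only [shiftFst, Set.mem_image, Set.mem_ofPred_eq, Prod.mk.injEq, Prod.exists]
  constructor
  · rintro ⟨p, q, ⟨k, rfl, rfl⟩, rfl, rfl⟩
    exact ⟨k, by ring, rfl⟩
  · rintro ⟨k, rfl, rfl⟩
    exact ⟨x + k * a, y + k * b, ⟨k, rfl, rfl⟩, by ring, rfl⟩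

lemma shiftSnd_orbit (d : ℤ) :
    shiftSnd d {q : ℤ × ℤ | ∃ k : ℤ, q = (x + k * a, y + k * b)}
      = {q : ℤ × ℤ | ∃ k : ℤ, q = (x + k * a, y + d + k * b)} := by
  ext ⟨u, v⟩
  simp only [shiftSnd, Set.mem_image, Set.mem_ofPred_eq, Prod.mk.injEq, Prod.exists]
  constructor
  · rintro ⟨p, q, ⟨k, rfl, rfl⟩, rfl, rfl⟩
    exact ⟨k, rfl, by ring⟩
  · rintro ⟨k, rfl, rfl⟩
    exact ⟨x + k * a, y + k * b, ⟨k, rfl, rfl⟩, rfl, by ring⟩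

lemma orbit_eq_translate (m : ℤ) :
    {q : ℤ × ℤ | ∃ k : ℤ, q = (x + k * a, y + k * b)}
      = {q : ℤ × ℤ | ∃ k : ℤ, q = (x + m * a + k * a, y + m * b + k * b)} := by
  ext q
  simp only [Set.mem_ofPred_eq]
  constructor
  · rintro ⟨k, rfl⟩
    exact ⟨k - m, by ext <;> simp only <;> ring⟩
  · rintro ⟨k, rfl⟩
    exact ⟨k + m, by ext <;> simp only <;> ring⟩

end Orbit

lemma shiftFst_orbPP (g h d x y : ℤ) : shiftFst d (orbPP g h x y) = orbPP g h (x + d) y :=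
  shiftFst_orbit g h x y d

lemma shiftSnd_orbPP (g h d x y : ℤ) : shiftSnd d (orbPP g h x y) = orbPP g h x (y + d) :=
  shiftSnd_orbit g h x y d

lemma orbPer_eq_translate (c i j m : ℤ) : orbPer c i j = orbPer c (i + m * c) (j + m * c) :=
  orbit_eq_translate c c i j m

lemma isPreproj_orbPP {g h x y : ℤ} (hx : x ≤ 0) (hy : 0 ≤ y) :
    IsPreproj g h (orbPP g h x y) := by
  induction y, hy using Int.leInduction with
  | base =>
    induction x, hx using Int.leInductionDown with
    | base => exact .refl
    | pred x _ ih => exact ih.tail (Or.inl (by rw [shiftFst_orbPP, sub_eq_add_neg]))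
  | succ y _ ih => exact ih.tail (Or.inr (shiftSnd_orbPP g h 1 x y).symm)

lemma gammaArc_zero {g : ℤ} (h : ℤ) (hg : 0 ≤ g) : gammaArc g h 0 = orbPI g h (-2) (2 - g) := by
  rw [gammaArc, if_pos hg, zero_sub, neg_add_eq_sub]

def Linked (g h : ℤ) (u v : AArc) : Prop :=
  Admissible g h u ∧ Admissible g h v ∧ (Move g h u v ∨ Move g h v u)

section Linked

variable {g h : ℤ}

instance : Std.Symm (Linked g h) := ⟨fun _ _ ⟨hu, hv, huv⟩ => ⟨hv, hu, huv.symm⟩⟩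

lemma Linked.of_move {u v : AArc} (hu : Admissible g h u) (hv : Admissible g h v)
    (huv : Move g h u v) : Linked g h u v :=
  ⟨hu, hv, Or.inl huv⟩

lemma reflTransGen_linked_of_isPreproj {A : Set (ℤ × ℤ)} (hA : IsPreproj g h A) :
    ReflTransGen (Linked g h) (.pp (orbPP g h 0 0)) (.pp A) := by
  induction hA with
  | refl => exact .refl
  | tail hB hBC ih => exact ih.tail (.of_move hB (hB.tail hBC) hBC)

lemma reflTransGen_linked_of_isPreinj {A : Set (ℤ × ℤ)} (hA : IsPreinj g h A) :
    ReflTransGen (Linked g h) (.pi A) (.pi (gammaArc g h 0)) := by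
  induction hA using ReflTransGen.head_induction_on with
  | refl => exact .refl
  | head hBC hC ih => exact ih.head (.of_move (u := .pi _) (v := .pi _) (hC.head hBC) hC hBC)

lemma reflTransGen_linked_of_isPerOut (hg : 0 < g) {A : Set (ℤ × ℤ)} (hA : IsPerOut g A) :
    ReflTransGen (Linked g h) (.pp (orbPP g h 0 0)) (.po A) := by
  obtain ⟨i, j, hij, rfl⟩ := hA
  have hx : i + -|i| * g ≤ 0 := by nlinarith [le_abs_self i, abs_nonneg i]
  have hpre : IsPreproj g h (orbPP g h (i + -|i| * g) 0) := isPreproj_orbPP hx le_rfl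
  have hmove : Move g h (.pp (orbPP g h (i + -|i| * g) 0)) (.po (orbPer g i j)) :=
    ⟨hpre, _, 0, j - i, by omega, rfl, by rw [orbPer_eq_translate g i j (-|i|)]; ring_nf⟩
  exact (reflTransGen_linked_of_isPreproj hpre).tail (.of_move hpre ⟨i, j, hij, rfl⟩ hmove)

lemma reflTransGen_linked_of_isPerIn (hh : 0 < h) {A : Set (ℤ × ℤ)} (hA : IsPerIn h A) :
    ReflTransGen (Linked g h) (.pp (orbPP g h 0 0)) (.pe A) := by
  obtain ⟨i, j, hij, rfl⟩ := hA
  have hy : 0 ≤ j + |j| * h := by nlinarith [neg_abs_le j, abs_nonneg j]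
  have hpre : IsPreproj g h (orbPP g h 0 (j + |j| * h)) := isPreproj_orbPP le_rfl hy
  have hmove : Move g h (.pp (orbPP g h 0 (j + |j| * h))) (.pe (orbPer h i j)) :=
    ⟨hpre, 0, _, j - i, by omega, rfl, by rw [orbPer_eq_translate h i j |j|]; ring_nf⟩
  exact (reflTransGen_linked_of_isPreproj hpre).tail (.of_move hpre ⟨i, j, hij, rfl⟩ hmove)

lemma linked_orbPer_gammaArc_zero (hg : 0 ≤ g) :
    Linked g h (.po (orbPer g (-g) (2 - g))) (.pi (gammaArc g h 0)) :=
  .of_move ⟨-g, 2 - g, by omega, rfl⟩ .refl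
    ⟨-g, 2 - g, -2, by omega, rfl, gammaArc_zero h hg, .refl⟩

lemma reflTransGen_linked_of_admissible (hg : 0 < g) (hh : 0 < h) {γ : AArc}
    (hγ : Admissible g h γ) : ReflTransGen (Linked g h) (.pp (orbPP g h 0 0)) γ := by
  cases γ with
  | pp A => exact reflTransGen_linked_of_isPreproj hγ
  | pi A =>
    have hγ₀ := (reflTransGen_linked_of_isPerOut hg ⟨-g, 2 - g, by omega, rfl⟩).tail
      (linked_orbPer_gammaArc_zero (h := h) hg.le)
    exact hγ₀.trans (symm (reflTransGen_linked_of_isPreinj hγ))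
  | po A => exact reflTransGen_linked_of_isPerOut hg hγ
  | pe A => exact reflTransGen_linked_of_isPerIn hh hγ

end Linked

/-- the quiver `Γ̄`, whose vertices are the admissible arcs of `P_{g,h}` and
whose arrows are all elementary and long moves, is connected: any two admissible arcs are
joined by a finite sequence of admissible arcs in which consecutive terms are related by a
move in one direction or the other. -/
theorem gammaBar_connected (g h : ℤ) (hh : 1 ≤ h) (hgh : h ≤ g) (α β : AArc)
    (hα : Admissible g h α) (hβ : Admissible g h β) :
    Relation.ReflTransGen
      (fun u v => Admissible g h u ∧ Admissible g h v ∧ (Move g h u v ∨ Move g h v u))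
      α β := by
  have hg : 0 < g := by omega
  have hh₀ : 0 < h := by omega
  exact (symm (reflTransGen_linked_of_admissible hg hh₀ hα)).trans
    (reflTransGen_linked_of_admissible hg hh₀ hβ)
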